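/- For every n ≥ 1, every m > 0 and every x ∈ ℝ^n with ‖x‖ ≤ 1, one has −1/m ≤ W_m^*(x) < 0. In particular, W_m^* converges to 0 uniformly on the closed unit ball as m → ∞. -/

import Mathlib

noncomputable section

/-- The regularized energy density `W_m(p) = (‖p‖² + m⁻²)^{1/2} + m⁻¹‖p‖²`. -/
def Wfun (n : ℕ) (m : ℝ) (p : EuclideanSpace ℝ (Fin n)) : ℝ :=
  Real.sqrt (‖p‖ ^ 2 + m⁻¹ ^ 2) + m⁻¹ * ‖p‖ ^ 2

/-- The Legendre–Fenchel conjugate `W_m^*(x) = sup_p (⟨p,x⟩ - W_m(p))`. -/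
def Wstar (n : ℕ) (m : ℝ) (x : EuclideanSpace ℝ (Fin n)) : ℝ :=
  sSup (Set.range fun p => (inner ℝ p x : ℝ) - Wfun n m p)

/-! For `‖x‖ ≤ 1` and `t = ‖p‖`, Cauchy–Schwarz bounds `⟨p, x⟩ - W_m(p)` by
`t - √(t² + ε²) - ε t²` with `ε = m⁻¹`. Rationalising, `t - √(t² + ε²) ≤ -ε² / (2t + ε)`, which
is at most `-ε² / (2 + ε)` for `t ≤ 1`, while for `t ≥ 1` the term `-ε t²` alone is at most
`-ε`. Hence `W_m^* ≤ -ε² / (2 + ε) < 0` on the unit ball, and the choice `p = 0` gives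
`W_m^*(x) ≥ -W_m(0) = -m⁻¹`. -/

open Filter Topology

theorem tendstoUniformlyOn_zero_of_norm_le {ι κ E : Type*} [SeminormedAddGroup E]
    {F : ι → κ → E} {s : Set κ} {l : Filter ι} {g : ι → ℝ} (hg : Tendsto g l (𝓝 0))
    (hF : ∀ᶠ i in l, ∀ x ∈ s, ‖F i x‖ ≤ g i) : TendstoUniformlyOn F 0 l s := by
  refine SeminormedAddGroup.tendstoUniformlyOn_zero.2 fun ε hε => ?_
  filter_upwards [hF, hg.eventually (gt_mem_nhds hε)] with i hFi hgi x hx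
  exact (hFi x hx).trans_lt hgi

namespace Real

theorem sub_sqrt_sq_add_sq_le {t ε : ℝ} (ht : 0 ≤ t) (hε : 0 < ε) :
    t - √(t ^ 2 + ε ^ 2) ≤ -(ε ^ 2 / (2 * t + ε)) := by
  have hs : √(t ^ 2 + ε ^ 2) ^ 2 = t ^ 2 + ε ^ 2 := sq_sqrt (by positivity)
  have hts : t ≤ √(t ^ 2 + ε ^ 2) := le_sqrt_of_sq_le (by nlinarith)
  have hst : √(t ^ 2 + ε ^ 2) ≤ t + ε := sqrt_le_left (by positivity) |>.2 (by nlinarith)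
  rw [le_neg, neg_sub, div_le_iff₀ (by positivity)]
  nlinarith [mul_nonneg (sub_nonneg.2 hts) (sub_nonneg.2 hst)]

theorem sub_sqrt_sq_add_sq_sub_mul_sq_le {t ε : ℝ} (ht : 0 ≤ t) (hε : 0 < ε) :
    t - √(t ^ 2 + ε ^ 2) - ε * t ^ 2 ≤ -(ε ^ 2 / (2 + ε)) := by
  have hroot := sub_sqrt_sq_add_sq_le ht hε
  rcases le_total t 1 with ht1 | ht1
  · have : ε ^ 2 / (2 + ε) ≤ ε ^ 2 / (2 * t + ε) :=
      div_le_div_of_nonneg_left (by positivity) (by positivity) (by linarith)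
    nlinarith [mul_nonneg hε.le (sq_nonneg t)]
  · have : ε ^ 2 / (2 + ε) ≤ ε := by
      rw [div_le_iff₀ (by positivity)]; nlinarith
    have : ε ≤ ε * t ^ 2 := le_mul_of_one_le_right hε.le (one_le_pow₀ ht1)
    have : 0 ≤ ε ^ 2 / (2 * t + ε) := by positivity
    linarith

end Real

section

variable {n : ℕ} {m : ℝ}

theorem Wfun_zero (hm : 0 ≤ m) : Wfun n m 0 = m⁻¹ := by
  simp [Wfun, Real.sqrt_sq hm]

theorem inner_sub_Wfun_le (hm : 0 < m) {x : EuclideanSpace ℝ (Fin n)} (hx : ‖x‖ ≤ 1)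
    (p : EuclideanSpace ℝ (Fin n)) :
    inner ℝ p x - Wfun n m p ≤ -(m⁻¹ ^ 2 / (2 + m⁻¹)) := by
  have hpx : inner ℝ p x ≤ ‖p‖ :=
    (real_inner_le_norm p x).trans (mul_le_of_le_one_right (norm_nonneg p) hx)
  have := Real.sub_sqrt_sq_add_sq_sub_mul_sq_le (norm_nonneg p) (inv_pos.2 hm)
  rw [Wfun]
  linarith

theorem Wstar_bounds (hm : 0 < m) {x : EuclideanSpace ℝ (Fin n)} (hx : ‖x‖ ≤ 1) :
    -m⁻¹ ≤ Wstar n m x ∧ Wstar n m x ≤ -(m⁻¹ ^ 2 / (2 + m⁻¹)) := by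
  have hbdd : BddAbove (Set.range fun p => inner ℝ p x - Wfun n m p) :=
    ⟨_, Set.forall_mem_range.2 (inner_sub_Wfun_le hm hx)⟩
  constructor
  · simpa [Wstar, Wfun_zero hm.le] using le_csSup hbdd (Set.mem_range_self 0)
  · exact csSup_le (Set.range_nonempty _) (Set.forall_mem_range.2 (inner_sub_Wfun_le hm hx))

end

theorem Wstar_unit_ball_general (n : ℕ) :
    (∀ m : ℝ, 0 < m → ∀ x : EuclideanSpace ℝ (Fin n), ‖x‖ ≤ 1 →
      -1 / m ≤ Wstar n m x ∧ Wstar n m x < 0) ∧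
    TendstoUniformlyOn (fun (m : ℝ) (x : EuclideanSpace ℝ (Fin n)) => Wstar n m x)
      (fun _ => 0) Filter.atTop (Metric.closedBall 0 1) := by
  constructor
  · intro m hm x hx
    obtain ⟨hlow, hup⟩ := Wstar_bounds hm hx
    exact ⟨by rwa [neg_div, one_div], hup.trans_lt (neg_neg_of_pos (by positivity))⟩
  · refine tendstoUniformlyOn_zero_of_norm_le tendsto_inv_atTop_zero ?_
    filter_upwards [eventually_gt_atTop 0] with m hm x hx
    obtain ⟨hlow, hup⟩ := Wstar_bounds hm (mem_closedBall_zero_iff.1 hx)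
    have : 0 ≤ m⁻¹ ^ 2 / (2 + m⁻¹) := by positivity
    exact abs_le.2 ⟨hlow, by linarith⟩

/-- On the closed unit ball, `-1/m ≤ W_m^* < 0`; in particular `W_m^* → 0` uniformly on the
closed unit ball as `m → ∞`. -/
theorem Wstar_unit_ball (n : ℕ) (hn : 1 ≤ n) :
    (∀ m : ℝ, 0 < m → ∀ x : EuclideanSpace ℝ (Fin n), ‖x‖ ≤ 1 →
      -1 / m ≤ Wstar n m x ∧ Wstar n m x < 0) ∧
    TendstoUniformlyOn (fun (m : ℝ) (x : EuclideanSpace ℝ (Fin n)) => Wstar n m x)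
      (fun _ => 0) Filter.atTop (Metric.closedBall 0 1) :=
  Wstar_unit_ball_general n
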